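/- For every g ∈ SL₂(ℚ) and every x ∈ ℝ with g·x ≠ ∞, there exists a piecewise-SL₂(ℚ) homeomorphism h of ℝ with all breakpoints in ℚ which coincides with the projective action of g on a neighbourhood of x; moreover h can be chosen to be a C¹-diffeomorphism of ℝ. -/

import Mathlib

open Matrix Filter Topology MeasureTheory

noncomputable section

/-- The group of homeomorphisms of a topological space, under composition. -/
instance Homeomorph.instGroup' {X : Type*} [TopologicalSpace X] : Group (X ≃ₜ X) where
  mul a b := b.trans a
  one := Homeomorph.refl X
  inv := Homeomorph.symm
  mul_assoc a b c := Homeomorph.ext fun _ => rfl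
  one_mul a := Homeomorph.ext fun _ => rfl
  mul_one a := Homeomorph.ext fun _ => rfl
  inv_mul_cancel a := Homeomorph.ext fun x => a.symm_apply_apply x

@[simp] lemma Homeomorph.mul_apply' {X : Type*} [TopologicalSpace X]
    (a b : X ≃ₜ X) (x : X) : (a * b) x = a (b x) := rfl

@[simp] lemma Homeomorph.inv_coe {X : Type*} [TopologicalSpace X]
    (a : X ≃ₜ X) : (a⁻¹ : X ≃ₜ X) = a.symm := rfl

abbrev SL2 (R : Type*) [CommRing R] := Matrix.SpecialLinearGroup (Fin 2) R

namespace PP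

/-- Denominator of the Möbius transformation attached to `g`. -/
def mdenom (g : SL2 ℝ) (x : ℝ) : ℝ := g.1 1 0 * x + g.1 1 1

/-- The Möbius transformation attached to `g`. -/
def moebius (g : SL2 ℝ) (x : ℝ) : ℝ := (g.1 0 0 * x + g.1 0 1) / (g.1 1 0 * x + g.1 1 1)

/-- `g` is a local (projective) piece of the homeomorphism `h` at the point `x`. -/
def IsLocalPiece (h : ℝ ≃ₜ ℝ) (g : SL2 ℝ) (x : ℝ) : Prop :=
  mdenom g x ≠ 0 ∧ ∀ᶠ y in 𝓝 x, h y = moebius g y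

/-- `h` is piecewise given by Möbius transformations of matrices in `M`:
outside of a finite set of breakpoints, `h` is locally a Möbius map from `M`. -/
def IsPiecewiseIn (M : Set (SL2 ℝ)) (h : ℝ ≃ₜ ℝ) : Prop :=
  ∃ B : Finset ℝ, ∀ x ∉ B, ∃ g ∈ M, IsLocalPiece h g x

/-- A breakpoint of `h` : a point where `h` is not locally projective. -/
def IsBreakpoint (h : ℝ ≃ₜ ℝ) (x : ℝ) : Prop := ¬ ∃ g : SL2 ℝ, IsLocalPiece h g x

/-- Matrices with entries in the subring `A`. -/
def entriesIn (A : Subring ℝ) : Set (SL2 ℝ) := {g | ∀ i j, g.1 i j ∈ A}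

lemma one_entriesIn (A : Subring ℝ) : (1 : SL2 ℝ) ∈ entriesIn A := by
  intro i j
  by_cases h : i = j <;>
    simp [entriesIn, Matrix.SpecialLinearGroup.coe_one, Matrix.one_apply, h, A.one_mem, A.zero_mem]

lemma mul_entriesIn {A : Subring ℝ} {g₁ g₂ : SL2 ℝ} (h₁ : g₁ ∈ entriesIn A)
    (h₂ : g₂ ∈ entriesIn A) : g₁ * g₂ ∈ entriesIn A := by
  intro i j
  rw [Matrix.SpecialLinearGroup.coe_mul, Matrix.mul_apply]
  exact Subring.sum_mem A fun k _ => A.mul_mem (h₁ i k) (h₂ k j)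

lemma inv_entriesIn {A : Subring ℝ} {g : SL2 ℝ} (h : g ∈ entriesIn A) :
    g⁻¹ ∈ entriesIn A := by
  intro i j
  have : (g⁻¹ : SL2 ℝ).1 = (g.1).adjugate := Matrix.SpecialLinearGroup.coe_inv g
  rw [this, Matrix.adjugate_fin_two]
  fin_cases i <;> fin_cases j <;>
    simp [Matrix.cons_val_zero, Matrix.cons_val_one] <;>
    first
      | exact h 1 1
      | exact h 0 1
      | exact h 1 0
      | exact A.neg_mem (h 0 1)
      | exact A.neg_mem (h 1 0)
      | exact h 0 0

lemma det_eq (g : SL2 ℝ) : g.1 0 0 * g.1 1 1 - g.1 0 1 * g.1 1 0 = 1 := by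
  have := g.2
  rwa [Matrix.det_fin_two] at this

/-- Composition of Möbius transformations (denominator part). -/
lemma mdenom_mul (g₁ g₂ : SL2 ℝ) (x : ℝ) (h₂ : mdenom g₂ x ≠ 0) :
    mdenom (g₁ * g₂) x = mdenom g₁ (moebius g₂ x) * mdenom g₂ x := by
  unfold mdenom moebius at *
  rw [Matrix.SpecialLinearGroup.coe_mul, Matrix.mul_apply, Matrix.mul_apply, Fin.sum_univ_two,
    Fin.sum_univ_two]
  field_simp
  ring

lemma mdenom_mul_ne (g₁ g₂ : SL2 ℝ) (x : ℝ) (h₂ : mdenom g₂ x ≠ 0)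
    (h₁ : mdenom g₁ (moebius g₂ x) ≠ 0) : mdenom (g₁ * g₂) x ≠ 0 := by
  rw [mdenom_mul g₁ g₂ x h₂]; exact mul_ne_zero h₁ h₂

lemma moebius_mul (g₁ g₂ : SL2 ℝ) (x : ℝ) (h₂ : mdenom g₂ x ≠ 0)
    (h₁ : mdenom g₁ (moebius g₂ x) ≠ 0) :
    moebius (g₁ * g₂) x = moebius g₁ (moebius g₂ x) := by
  have hden := mdenom_mul_ne g₁ g₂ x h₂ h₁
  unfold mdenom moebius at *
  simp only [Matrix.SpecialLinearGroup.coe_mul, Matrix.mul_apply, Fin.sum_univ_two] at *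
  rw [div_eq_div_iff hden h₁]
  field_simp
  ring

lemma inv_entry_00 (g : SL2 ℝ) : (g⁻¹ : SL2 ℝ).1 0 0 = g.1 1 1 := by
  simp [Matrix.SpecialLinearGroup.coe_inv, Matrix.adjugate_fin_two]
lemma inv_entry_01 (g : SL2 ℝ) : (g⁻¹ : SL2 ℝ).1 0 1 = -g.1 0 1 := by
  simp [Matrix.SpecialLinearGroup.coe_inv, Matrix.adjugate_fin_two]
lemma inv_entry_10 (g : SL2 ℝ) : (g⁻¹ : SL2 ℝ).1 1 0 = -g.1 1 0 := by
  simp [Matrix.SpecialLinearGroup.coe_inv, Matrix.adjugate_fin_two]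
lemma inv_entry_11 (g : SL2 ℝ) : (g⁻¹ : SL2 ℝ).1 1 1 = g.1 0 0 := by
  simp [Matrix.SpecialLinearGroup.coe_inv, Matrix.adjugate_fin_two]

lemma moebius_one (x : ℝ) : moebius 1 x = x := by
  unfold moebius
  simp [Matrix.SpecialLinearGroup.coe_one, Matrix.one_apply]

lemma mdenom_one (x : ℝ) : mdenom 1 x = 1 := by
  unfold mdenom
  simp [Matrix.SpecialLinearGroup.coe_one, Matrix.one_apply]

lemma mdenom_inv (g : SL2 ℝ) (x : ℝ) (h : mdenom g x ≠ 0) :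
    mdenom g⁻¹ (moebius g x) = 1 / mdenom g x := by
  have hdet := det_eq g
  unfold mdenom moebius at *
  rw [inv_entry_10, inv_entry_11]
  field_simp
  linear_combination hdet

lemma moebius_inv (g : SL2 ℝ) (x : ℝ) (h : mdenom g x ≠ 0) :
    mdenom g⁻¹ (moebius g x) ≠ 0 ∧ moebius g⁻¹ (moebius g x) = x := by
  have h1 : mdenom g⁻¹ (moebius g x) = 1 / mdenom g x := mdenom_inv g x h
  have hne : mdenom g⁻¹ (moebius g x) ≠ 0 := by rw [h1]; exact one_div_ne_zero h
  refine ⟨hne, ?_⟩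
  rw [← moebius_mul g⁻¹ g x h hne, inv_mul_cancel, moebius_one]

lemma mdenom_continuous (g : SL2 ℝ) : Continuous (mdenom g) := by
  unfold mdenom; fun_prop

lemma eventually_mdenom_ne (g : SL2 ℝ) {x : ℝ} (h : mdenom g x ≠ 0) :
    ∀ᶠ y in 𝓝 x, mdenom g y ≠ 0 :=
  (mdenom_continuous g).continuousAt.eventually_ne h

lemma IsLocalPiece.mul {a b : ℝ ≃ₜ ℝ} {g₁ g₂ : SL2 ℝ} {x : ℝ}
    (h₁ : IsLocalPiece a g₁ (b x)) (h₂ : IsLocalPiece b g₂ x) :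
    IsLocalPiece (a * b) (g₁ * g₂) x := by
  obtain ⟨d₂, e₂⟩ := h₂
  obtain ⟨d₁, e₁⟩ := h₁
  have hbx : b x = moebius g₂ x := e₂.self_of_nhds
  have d₁' : mdenom g₁ (moebius g₂ x) ≠ 0 := hbx ▸ d₁
  refine ⟨mdenom_mul_ne g₁ g₂ x d₂ d₁', ?_⟩
  have hmap : ∀ᶠ y in 𝓝 x, a (b y) = moebius g₁ (b y) := by
    have hb : Filter.map b (𝓝 x) = 𝓝 (b x) := b.map_nhds_eq x
    rw [← hb] at e₁
    exact e₁
  have hd1ev : ∀ᶠ y in 𝓝 x, mdenom g₁ (b y) ≠ 0 := by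
    have hb : Filter.map b (𝓝 x) = 𝓝 (b x) := b.map_nhds_eq x
    have := eventually_mdenom_ne g₁ d₁
    rw [← hb] at this
    exact this
  filter_upwards [e₂, hmap, hd1ev, eventually_mdenom_ne g₂ d₂] with y hy₂ hy₁ hyd₁ hyd₂
  have hyd₁' : mdenom g₁ (moebius g₂ y) ≠ 0 := by rw [← hy₂]; exact hyd₁
  calc (a * b) y = a (b y) := rfl
    _ = moebius g₁ (b y) := hy₁
    _ = moebius g₁ (moebius g₂ y) := by rw [hy₂]
    _ = moebius (g₁ * g₂) y := (moebius_mul g₁ g₂ y hyd₂ hyd₁').symm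

lemma IsLocalPiece.inv {h : ℝ ≃ₜ ℝ} {g : SL2 ℝ} {x : ℝ} (hp : IsLocalPiece h g x) :
    IsLocalPiece h⁻¹ g⁻¹ (h x) := by
  obtain ⟨d, e⟩ := hp
  have hx : h x = moebius g x := e.self_of_nhds
  refine ⟨by rw [hx]; exact (moebius_inv g x d).1, ?_⟩
  have hb : Filter.map h (𝓝 x) = 𝓝 (h x) := h.map_nhds_eq x
  rw [← hb, Filter.eventually_map]
  filter_upwards [e, eventually_mdenom_ne g d] with y hy hyd
  calc (h⁻¹ : ℝ ≃ₜ ℝ) (h y) = y := h.symm_apply_apply y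
    _ = moebius g⁻¹ (h y) := by rw [hy]; exact ((moebius_inv g y hyd).2).symm

lemma isLocalPiece_one (x : ℝ) : IsLocalPiece 1 1 x := by
  refine ⟨by rw [mdenom_one]; exact one_ne_zero, ?_⟩
  filter_upwards with y
  rw [moebius_one]
  rfl

/-- The group of piecewise-`SL₂(A)` homeomorphisms of the real line. -/
def PW (A : Subring ℝ) : Subgroup (ℝ ≃ₜ ℝ) where
  carrier := {h | IsPiecewiseIn (entriesIn A) h}
  one_mem' := ⟨∅, fun x _ => ⟨1, one_entriesIn A, isLocalPiece_one x⟩⟩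
  mul_mem' := by
    rintro a b ⟨Ba, hBa⟩ ⟨Bb, hBb⟩
    refine ⟨Bb ∪ Ba.image b.symm, fun x hx => ?_⟩
    rw [Finset.mem_union, not_or] at hx
    obtain ⟨hxb, hxa⟩ := hx
    obtain ⟨g₂, hg₂A, hg₂⟩ := hBb x hxb
    have hbx : b x ∉ Ba := by
      intro hmem
      exact hxa (Finset.mem_image.2 ⟨b x, hmem, b.symm_apply_apply x⟩)
    obtain ⟨g₁, hg₁A, hg₁⟩ := hBa (b x) hbx
    exact ⟨g₁ * g₂, mul_entriesIn hg₁A hg₂A, hg₁.mul hg₂⟩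
  inv_mem' := by
    rintro h ⟨B, hB⟩
    refine ⟨B.image h, fun y hy => ?_⟩
    have hxB : h.symm y ∉ B := by
      intro hmem
      exact hy (Finset.mem_image.2 ⟨h.symm y, hmem, h.apply_symm_apply y⟩)
    obtain ⟨g, hgA, hg⟩ := hB (h.symm y) hxB
    have := hg.inv
    rw [h.apply_symm_apply y] at this
    exact ⟨g⁻¹, inv_entriesIn hgA, this⟩

/-- Real fixed points of hyperbolic elements of `SL₂(A)`. -/
def FixHyp (A : Subring ℝ) : Set ℝ :=
  {x | ∃ g : SL2 ℝ, g ∈ entriesIn A ∧ |Matrix.trace g.1| > 2 ∧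
        mdenom g x ≠ 0 ∧ moebius g x = x}

lemma trace_conj (g q : SL2 ℝ) :
    Matrix.trace ((g⁻¹ * q * g : SL2 ℝ) : Matrix (Fin 2) (Fin 2) ℝ) = Matrix.trace q.1 := by
  rw [Matrix.SpecialLinearGroup.coe_mul, Matrix.SpecialLinearGroup.coe_mul,
    Matrix.trace_mul_comm, ← Matrix.mul_assoc, ← Matrix.SpecialLinearGroup.coe_mul,
    mul_inv_cancel, Matrix.SpecialLinearGroup.coe_one, Matrix.one_mul]

lemma FixHyp.conj {A : Subring ℝ} {g : SL2 ℝ} {x : ℝ} (hgA : g ∈ entriesIn A)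
    (hd : mdenom g x ≠ 0) (hfix : moebius g x ∈ FixHyp A) : x ∈ FixHyp A := by
  obtain ⟨q, hqA, hqtr, hqd, hqfix⟩ := hfix
  refine ⟨g⁻¹ * q * g, mul_entriesIn (mul_entriesIn (inv_entriesIn hgA) hqA) hgA,
    by rw [trace_conj]; exact hqtr, ?_, ?_⟩
  all_goals
    have hden1 : mdenom (q * g) x ≠ 0 := mdenom_mul_ne q g x hd hqd
    have hmo1 : moebius (q * g) x = moebius g x := by
      rw [moebius_mul q g x hd hqd, hqfix]
    have hden2 : mdenom g⁻¹ (moebius (q * g) x) ≠ 0 := by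
      rw [hmo1]; exact (moebius_inv g x hd).1
  · rw [mul_assoc]
    exact mdenom_mul_ne g⁻¹ (q * g) x hden1 hden2
  · rw [mul_assoc, moebius_mul g⁻¹ (q * g) x hden1 hden2, hmo1]
    exact (moebius_inv g x hd).2

/-- `h` is locally an `SL₂(A)`-Möbius map away from the set `Φ`. -/
def LocallyIn (A : Subring ℝ) (Φ : Set ℝ) (h : ℝ ≃ₜ ℝ) : Prop :=
  ∀ x : ℝ, x ∉ Φ → ∃ g ∈ entriesIn A, IsLocalPiece h g x

/-- The complement of `Φ` is invariant under Möbius maps with entries in `A`. -/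
def MoebiusInv (A : Subring ℝ) (Φ : Set ℝ) : Prop :=
  ∀ g ∈ entriesIn A, ∀ x : ℝ, mdenom g x ≠ 0 → x ∉ Φ → moebius g x ∉ Φ

lemma LocallyIn.mul {A : Subring ℝ} {Φ : Set ℝ} (hΦ : MoebiusInv A Φ) {a b : ℝ ≃ₜ ℝ}
    (ha : LocallyIn A Φ a) (hb : LocallyIn A Φ b) : LocallyIn A Φ (a * b) := by
  intro x hx
  obtain ⟨g₂, hg₂A, hg₂⟩ := hb x hx
  have hbx : b x ∉ Φ := by
    have : b x = moebius g₂ x := hg₂.2.self_of_nhds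
    rw [this]
    exact hΦ g₂ hg₂A x hg₂.1 hx
  obtain ⟨g₁, hg₁A, hg₁⟩ := ha (b x) hbx
  exact ⟨g₁ * g₂, mul_entriesIn hg₁A hg₂A, hg₁.mul hg₂⟩

/-- The group of piecewise-`SL₂(A)` homeomorphisms of the line all of whose
breakpoints lie in the set `Φ`. -/
def BreakIn (A : Subring ℝ) (Φ : Set ℝ) (hΦ : MoebiusInv A Φ) : Subgroup (ℝ ≃ₜ ℝ) where
  carrier := {h | IsPiecewiseIn (entriesIn A) h ∧ LocallyIn A Φ h ∧ LocallyIn A Φ h⁻¹}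
  one_mem' := by
    refine ⟨(PW A).one_mem', ?_, ?_⟩ <;>
      · intro x _
        exact ⟨1, one_entriesIn A, isLocalPiece_one x⟩
  mul_mem' := by
    rintro a b ⟨hapw, ha, ha'⟩ ⟨hbpw, hb, hb'⟩
    refine ⟨(PW A).mul_mem' hapw hbpw, LocallyIn.mul hΦ ha hb, ?_⟩
    rw [_root_.mul_inv_rev]
    exact LocallyIn.mul hΦ hb' ha'
  inv_mem' := by
    rintro h ⟨hpw, h₁, h₂⟩
    refine ⟨(PW A).inv_mem' hpw, h₂, ?_⟩
    rw [inv_inv]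
    exact h₁

lemma fixHyp_moebiusInv (A : Subring ℝ) : MoebiusInv A (FixHyp A) :=
  fun g hg x hd hx hmem => hx (FixHyp.conj hg hd hmem)

/-- The group `H(A)`: piecewise-`SL₂(A)` homeomorphisms of the line whose
breakpoints are fixed points of hyperbolic elements of `SL₂(A)`. -/
def HGroup (A : Subring ℝ) : Subgroup (ℝ ≃ₜ ℝ) := BreakIn A (FixHyp A) (fixHyp_moebiusInv A)

/-- The ring `ℤ[1/S]` of `S`-integers, as a subring of `ℚ`. -/
def SIntQ (S : Set ℕ) : Subring ℚ := Subring.closure {x : ℚ | ∃ p ∈ S, x = (p : ℚ)⁻¹}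

/-- The ring `ℤ[1/S]` of `S`-integers, as a subring of `ℝ`. -/
def SIntR (S : Set ℕ) : Subring ℝ := Subring.closure {x : ℝ | ∃ p ∈ S, x = (p : ℝ)⁻¹}

/-- The group `Γ_S` of piecewise-`SL₂(ℤ[1/S])` homeomorphisms of the line. -/
def Gamma (S : Set ℕ) : Subgroup (ℝ ≃ₜ ℝ) := PW (SIntR S)

/-- `ℚ` as a subring of `ℝ`. -/
def ratSubring : Subring ℝ := (Rat.castHom ℝ).range

/-- `ℤ` as a subring of `ℝ`. -/
def intSubring : Subring ℝ := (Int.castRingHom ℝ).range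

/-- The group `H(ℚ)` of piecewise-`SL₂(ℚ)` homeomorphisms of the line. -/
def HQ : Subgroup (ℝ ≃ₜ ℝ) := PW ratSubring

lemma ratSubring_div_mem {x y : ℝ} (hx : x ∈ ratSubring) (hy : y ∈ ratSubring) :
    x / y ∈ ratSubring := by
  obtain ⟨q, rfl⟩ := RingHom.mem_range.1 hx
  obtain ⟨r, rfl⟩ := RingHom.mem_range.1 hy
  refine RingHom.mem_range.2 ⟨q / r, ?_⟩
  simp [Rat.cast_div]

lemma moebius_mem_rat {g : SL2 ℝ} (hg : g ∈ entriesIn ratSubring) {y : ℝ}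
    (hy : y ∈ ratSubring) : moebius g y ∈ ratSubring := by
  unfold moebius
  exact ratSubring_div_mem
    (ratSubring.add_mem (ratSubring.mul_mem (hg 0 0) hy) (hg 0 1))
    (ratSubring.add_mem (ratSubring.mul_mem (hg 1 0) hy) (hg 1 1))

lemma rat_moebiusInv {A : Subring ℝ} (hA : A ≤ ratSubring) :
    MoebiusInv A (ratSubring : Set ℝ) := by
  intro g hg x hd hx hmem
  apply hx
  have : moebius g⁻¹ (moebius g x) = x := (moebius_inv g x hd).2
  rw [← this]
  exact moebius_mem_rat (fun i j => hA (inv_entriesIn hg i j)) hmem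

lemma intSubring_le_rat : intSubring ≤ ratSubring := by
  rintro x ⟨n, rfl⟩
  refine RingHom.mem_range.2 ⟨(n : ℚ), ?_⟩
  simp

/-- Thompson's group `F` realized as `H_ℚ(ℤ)`: piecewise-`SL₂(ℤ)` homeomorphisms
of the line with rational breakpoints. -/
def Thompson : Subgroup (ℝ ≃ₜ ℝ) :=
  BreakIn intSubring (ratSubring : Set ℝ) (rat_moebiusInv intSubring_le_rat)

/-- The group `H_ℚ(ℚ)` of piecewise-`SL₂(ℚ)` homeomorphisms of the line with
rational breakpoints. -/
def HQrat : Subgroup (ℝ ≃ₜ ℝ) :=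
  BreakIn ratSubring (ratSubring : Set ℝ) (rat_moebiusInv le_rfl)

/-- A bounded real-valued function. -/
def Bdd {X : Type*} (f : X → ℝ) : Prop := ∃ C, ∀ x, |f x| ≤ C

/-- A mean: a normalized positive linear functional on bounded functions. -/
structure MeanOn (X : Type*) where
  toFun : (X → ℝ) → ℝ
  add' : ∀ f g : X → ℝ, Bdd f → Bdd g → toFun (f + g) = toFun f + toFun g
  smul' : ∀ (c : ℝ) (f : X → ℝ), Bdd f → toFun (c • f) = c * toFun f
  mono' : ∀ f g : X → ℝ, Bdd f → Bdd g → (∀ x, f x ≤ g x) → toFun f ≤ toFun g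
  one' : toFun (fun _ => 1) = 1

/-- A subgroup `H ≤ G` is co-amenable in `G` if there is a `G`-invariant mean on `G/H`. -/
def CoAmenableIn {G : Type*} [Group G] (H : Subgroup G) : Prop :=
  ∃ m : MeanOn (G ⧸ H), ∀ (g : G) (f : (G ⧸ H) → ℝ), Bdd f →
    m.toFun (fun x => f (g • x)) = m.toFun f

end PP

open PP

namespace PP

/-- A rational matrix viewed as a real matrix. -/
def toR (g : SL2 ℚ) : SL2 ℝ := Matrix.SpecialLinearGroup.map (Rat.castHom ℝ) g

/-- A rational matrix viewed as a `p`-adic matrix. -/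
def toPadic (p : ℕ) [Fact p.Prime] (g : SL2 ℚ) : SL2 ℚ_[p] :=
  Matrix.SpecialLinearGroup.map (Rat.castHom ℚ_[p]) g

end PP

/-! Choose rationals `p < x < q` such that `g` has no pole on `[p, q]` and continue `g` on
`[p, q]` by its tangent lines at `p` and at `q`. The result is `C¹` with positive derivative
and tends to `±∞`, hence a `C¹`-diffeomorphism of `ℝ`. The tangent line of a rational Möbius map
at a rational point is the Möbius map of a rational upper triangular matrix, so the only
breakpoints are the rational points `p` and `q`, and their images `g p`, `g q` are rational too. -/

open Set

theorem hasDerivAt_ite_lt {f₁ f₂ : ℝ → ℝ} {p y d : ℝ} (h₁ : y ≤ p → HasDerivAt f₁ d y)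
    (h₂ : p ≤ y → HasDerivAt f₂ d y) (hp : f₁ p = f₂ p) :
    HasDerivAt (fun z => if z < p then f₁ z else f₂ z) d y := by
  rcases lt_trichotomy y p with hy | rfl | hy
  · refine (h₁ hy.le).congr_of_eventuallyEq ?_
    filter_upwards [Iio_mem_nhds hy] with z hz
    simp [mem_Iio.1 hz]
  · have hL : HasDerivWithinAt (fun z => if z < y then f₁ z else f₂ z) d (Iic y) y :=
      (h₁ le_rfl).hasDerivWithinAt.congr_of_mem (fun z hz => by
        rcases (mem_Iic.1 hz).lt_or_eq with hz | rfl
        · simp [hz]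
        · simp [hp]) self_mem_Iic
    have hR : HasDerivWithinAt (fun z => if z < y then f₁ z else f₂ z) d (Ici y) y :=
      (h₂ le_rfl).hasDerivWithinAt.congr_of_mem (fun z hz => by simp [not_lt.2 (mem_Ici.1 hz)])
        self_mem_Ici
    simpa only [Iic_union_Ici, hasDerivWithinAt_univ] using hL.union hR
  · refine (h₂ hy.le).congr_of_eventuallyEq ?_
    filter_upwards [Ioi_mem_nhds hy] with z hz
    simp [not_lt.2 (mem_Ioi.1 hz).le]

theorem exists_homeomorph_contDiff_of_hasDerivAt_pos {f f' : ℝ → ℝ}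
    (hf : ∀ y, HasDerivAt f (f' y) y) (hf' : Continuous f') (hpos : ∀ y, 0 < f' y)
    (htop : Tendsto f atTop atTop) (hbot : Tendsto f atBot atBot) :
    ∃ h : ℝ ≃ₜ ℝ, ⇑h = f ∧ ContDiff ℝ 1 h ∧ ContDiff ℝ 1 h.symm := by
  have hdiff : Differentiable ℝ f := fun y => (hf y).differentiableAt
  have hderiv : deriv f = f' := funext fun y => (hf y).deriv
  have hmono : StrictMono f := strictMono_of_deriv_pos fun y => hderiv ▸ hpos y
  set h := (hmono.orderIsoOfSurjective f (hdiff.continuous.surjective htop hbot)).toHomeomorph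
  have hC1 : ContDiff ℝ 1 h := contDiff_one_iff_deriv.2 ⟨hdiff, hderiv ▸ hf'⟩
  exact ⟨h, rfl, hC1, h.contDiff_symm_deriv (fun y => (hpos y).ne') hf hC1⟩

theorem tendsto_affine_atTop {s : ℝ} (hs : 0 < s) (a b : ℝ) :
    Tendsto (fun y => a + s * (y - b)) atTop atTop :=
  tendsto_atTop_add_const_left _ a
    ((tendsto_atTop_add_const_right _ (-b) tendsto_id).const_mul_atTop hs)

theorem tendsto_affine_atBot {s : ℝ} (hs : 0 < s) (a b : ℝ) :
    Tendsto (fun y => a + s * (y - b)) atBot atBot :=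
  tendsto_atBot_add_const_left _ a
    ((tendsto_atBot_add_const_right _ (-b) tendsto_id).const_mul_atBot hs)

theorem exists_rat_Icc_subset_of_mem_nhds {x : ℝ} {U : Set ℝ} (hU : U ∈ 𝓝 x) :
    ∃ p q : ℚ, (p : ℝ) < x ∧ x < q ∧ Icc (p : ℝ) q ⊆ U := by
  obtain ⟨l, u, ⟨hl, hu⟩, hsub⟩ := mem_nhds_iff_exists_Ioo_subset.1 hU
  obtain ⟨p, hlp, hpx⟩ := exists_rat_btwn hl
  obtain ⟨q, hxq, hqu⟩ := exists_rat_btwn hu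
  exact ⟨p, q, hpx, hxq, (Icc_subset_Ioo hlp hqu).trans hsub⟩

def tangentExtend (f f' : ℝ → ℝ) (p q y : ℝ) : ℝ :=
  if y < p then f p + f' p * (y - p) else if y < q then f y else f q + f' q * (y - q)

section tangentExtend

variable {f f' : ℝ → ℝ} {p q : ℝ}

theorem tangentExtend_of_mem_Icc (hpq : p < q) {y : ℝ} (hy : y ∈ Icc p q) :
    tangentExtend f f' p q y = f y := by
  rcases hy.2.lt_or_eq with hyq | rfl
  · simp [tangentExtend, not_lt.2 hy.1, hyq]
  · simp [tangentExtend, not_lt.2 hpq.le]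

theorem tangentExtend_eventuallyEq_of_lt_left {y : ℝ} (hy : y < p) :
    tangentExtend f f' p q =ᶠ[𝓝 y] fun z => f p + f' p * (z - p) := by
  filter_upwards [Iio_mem_nhds hy] with z hz
  simp [tangentExtend, mem_Iio.1 hz]

theorem tangentExtend_eventuallyEq_of_mem_Ioo {y : ℝ} (hy : y ∈ Ioo p q) :
    tangentExtend f f' p q =ᶠ[𝓝 y] f := by
  filter_upwards [Ioo_mem_nhds hy.1 hy.2] with z hz
  exact tangentExtend_of_mem_Icc (hy.1.trans hy.2) (Ioo_subset_Icc_self hz)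

theorem tangentExtend_eventuallyEq_of_gt_right (hpq : p < q) {y : ℝ} (hy : q < y) :
    tangentExtend f f' p q =ᶠ[𝓝 y] fun z => f q + f' q * (z - q) := by
  filter_upwards [Ioi_mem_nhds hy] with z hz
  simp [tangentExtend, not_lt.2 (hpq.trans (mem_Ioi.1 hz)).le, not_lt.2 (mem_Ioi.1 hz).le]

theorem hasDerivAt_tangentExtend (hpq : p < q) (hf : ∀ y ∈ Icc p q, HasDerivAt f (f' y) y)
    (y : ℝ) : HasDerivAt (tangentExtend f f' p q) (f' (max p (min y q))) y := by
  have hline : ∀ a, HasDerivAt (fun z => f a + f' a * (z - a)) (f' a) y := fun a => by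
    simpa using ((hasDerivAt_id y).sub_const a).const_mul (f' a) |>.const_add (f a)
  refine hasDerivAt_ite_lt (fun hyp => ?_) (fun hpy => hasDerivAt_ite_lt (fun hyq => ?_)
    (fun hqy => ?_) (by simp)) (by simp [hpq])
  · rw [min_eq_left (hyp.trans hpq.le), max_eq_left hyp]
    exact hline p
  · rw [min_eq_left hyq, max_eq_right hpy]
    exact hf y ⟨hpy, hyq⟩
  · rw [min_eq_right hqy, max_eq_right hpq.le]
    exact hline q

theorem ContinuousOn.continuous_comp_max_min (hf' : ContinuousOn f' (Icc p q)) (hpq : p ≤ q) :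
    Continuous fun y => f' (max p (min y q)) :=
  hf'.comp_continuous (by fun_prop) fun y => ⟨le_max_left _ _, max_le hpq (min_le_right _ _)⟩

theorem exists_homeomorph_tangentExtend (hpq : p < q)
    (hf : ∀ y ∈ Icc p q, HasDerivAt f (f' y) y) (hf' : ContinuousOn f' (Icc p q))
    (hpos : ∀ y ∈ Icc p q, 0 < f' y) :
    ∃ h : ℝ ≃ₜ ℝ, ⇑h = tangentExtend f f' p q ∧ ContDiff ℝ 1 h ∧ ContDiff ℝ 1 h.symm := by
  refine exists_homeomorph_contDiff_of_hasDerivAt_pos (hasDerivAt_tangentExtend hpq hf)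
    (hf'.continuous_comp_max_min hpq.le) (fun y => hpos _ ⟨le_max_left _ _, ?_⟩) ?_ ?_
  · exact max_le hpq.le (min_le_right _ _)
  · refine (tendsto_affine_atTop (hpos q ⟨hpq.le, le_rfl⟩) (f q) q).congr' ?_
    filter_upwards [eventually_gt_atTop q] with y hy
    exact (tangentExtend_eventuallyEq_of_gt_right hpq hy).self_of_nhds.symm
  · refine (tendsto_affine_atBot (hpos p ⟨le_rfl, hpq.le⟩) (f p) p).congr' ?_
    filter_upwards [eventually_lt_atBot p] with y hy
    exact (tangentExtend_eventuallyEq_of_lt_left hy).self_of_nhds.symm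

end tangentExtend

namespace PP

theorem hasDerivAt_moebius (g : SL2 ℝ) {x : ℝ} (hx : mdenom g x ≠ 0) :
    HasDerivAt (moebius g) ((mdenom g x ^ 2)⁻¹) x := by
  have hline : ∀ a b : ℝ, HasDerivAt (fun y => a * y + b) a x := fun a b => by
    simpa using ((hasDerivAt_id x).const_mul a).add_const b
  refine ((hline _ _).div (hline _ _) hx).congr_deriv ?_
  unfold mdenom at hx ⊢
  field_simp
  linear_combination det_eq g

theorem ratCast_mem_ratSubring (r : ℚ) : (r : ℝ) ∈ ratSubring := ⟨r, rfl⟩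

theorem toR_mem_entriesIn (g : SL2 ℚ) : toR g ∈ entriesIn ratSubring :=
  fun i j => ratCast_mem_ratSubring (g.1 i j)

theorem exists_moebius_eq_tangent {g : SL2 ℝ} (hg : g ∈ entriesIn ratSubring) {r : ℝ}
    (hr : r ∈ ratSubring) (hd : mdenom g r ≠ 0) :
    ∃ L ∈ entriesIn ratSubring, ∀ y, mdenom L y ≠ 0 ∧
      moebius L y = moebius g r + (mdenom g r ^ 2)⁻¹ * (y - r) := by
  set α := mdenom g r
  have hα : α ∈ ratSubring := ratSubring.add_mem (ratSubring.mul_mem (hg 1 0) hr) (hg 1 1)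
  have hα' : α⁻¹ ∈ ratSubring := by simpa using ratSubring_div_mem ratSubring.one_mem hα
  have hm := moebius_mem_rat hg hr
  refine ⟨⟨!![α⁻¹, α * moebius g r - r * α⁻¹; 0, α], by simp [Matrix.det_fin_two_of, hd]⟩,
    ?_, fun y => ⟨?_, ?_⟩⟩
  · intro i j
    fin_cases i <;> fin_cases j
    · exact hα'
    · exact ratSubring.sub_mem (ratSubring.mul_mem hα hm) (ratSubring.mul_mem hr hα')
    · exact ratSubring.zero_mem
    · exact hα
  · simp [mdenom, hd]
  · simp only [moebius, of_apply, cons_val', cons_val_zero, cons_val_fin_one, cons_val_one,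
      zero_mul, zero_add]
    field_simp
    ring

theorem mem_breakIn_of_isLocalPiece {A : Subring ℝ} {Φ : Set ℝ} (hΦ : MoebiusInv A Φ)
    {h : ℝ ≃ₜ ℝ} (B : Finset ℝ) (hB : ∀ b ∈ B, b ∈ Φ ∧ h b ∈ Φ)
    (hloc : ∀ x ∉ B, ∃ g ∈ entriesIn A, IsLocalPiece h g x) : h ∈ BreakIn A Φ hΦ := by
  refine ⟨⟨B, hloc⟩, fun x hx => hloc x fun hxB => hx (hB x hxB).1, fun y hy => ?_⟩
  obtain ⟨g, hgA, hg⟩ := hloc (h.symm y) fun hyB => hy (by simpa using (hB _ hyB).2)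
  exact ⟨g⁻¹, inv_entriesIn hgA, by simpa using hg.inv⟩

section moebiusTangentExtend

variable {g : SL2 ℝ} {p q : ℝ} {h : ℝ ≃ₜ ℝ}

theorem exists_isLocalPiece_of_eq_tangentExtend (hg : g ∈ entriesIn ratSubring)
    (hp : p ∈ ratSubring) (hq : q ∈ ratSubring) (hpq : p < q)
    (hd : ∀ y ∈ Icc p q, mdenom g y ≠ 0)
    (hh : ⇑h = tangentExtend (moebius g) (fun y => (mdenom g y ^ 2)⁻¹) p q)
    {x : ℝ} (hxp : x ≠ p) (hxq : x ≠ q) : ∃ L ∈ entriesIn ratSubring, IsLocalPiece h L x := by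
  rcases hxp.lt_or_gt with hx | hpx
  · obtain ⟨L, hL, hLeq⟩ := exists_moebius_eq_tangent hg hp (hd p ⟨le_rfl, hpq.le⟩)
    refine ⟨L, hL, (hLeq x).1, ?_⟩
    filter_upwards [tangentExtend_eventuallyEq_of_lt_left hx] with y hy
    rw [hh, hy, (hLeq y).2]
  rcases hxq.lt_or_gt with hxq | hx
  · exact ⟨g, hg, hd x ⟨hpx.le, hxq.le⟩, hh ▸ tangentExtend_eventuallyEq_of_mem_Ioo ⟨hpx, hxq⟩⟩
  · obtain ⟨R, hR, hReq⟩ := exists_moebius_eq_tangent hg hq (hd q ⟨hpq.le, le_rfl⟩)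
    refine ⟨R, hR, (hReq x).1, ?_⟩
    filter_upwards [tangentExtend_eventuallyEq_of_gt_right hpq hx] with y hy
    rw [hh, hy, (hReq y).2]

theorem mem_HQrat_of_eq_tangentExtend (hg : g ∈ entriesIn ratSubring)
    (hp : p ∈ ratSubring) (hq : q ∈ ratSubring) (hpq : p < q)
    (hd : ∀ y ∈ Icc p q, mdenom g y ≠ 0)
    (hh : ⇑h = tangentExtend (moebius g) (fun y => (mdenom g y ^ 2)⁻¹) p q) : h ∈ HQrat := by
  refine mem_breakIn_of_isLocalPiece _ {p, q} ?_ fun x hx => ?_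
  · simp only [Finset.mem_insert, Finset.mem_singleton]
    rintro b (rfl | rfl) <;> refine ⟨‹_›, ?_⟩ <;> rw [hh, tangentExtend_of_mem_Icc hpq]
    exacts [moebius_mem_rat hg hp, ⟨le_rfl, hpq.le⟩, moebius_mem_rat hg hq, ⟨hpq.le, le_rfl⟩]
  · simp only [Finset.mem_insert, Finset.mem_singleton, not_or] at hx
    exact exists_isLocalPiece_of_eq_tangentExtend hg hp hq hpq hd hh hx.1 hx.2

end moebiusTangentExtend

end PP

/-- For every `g ∈ SL₂(ℚ)` and `x ∈ ℝ` with `g·x ≠ ∞`, there is a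
piecewise-`SL₂(ℚ)` homeomorphism of `ℝ` with rational breakpoints agreeing with `g`
near `x`; moreover it can be chosen to be a `C¹`-diffeomorphism of `ℝ`. -/
theorem rational_smooth_cut_and_paste (g : SL2 ℚ) (x : ℝ) (hx : mdenom (toR g) x ≠ 0) :
    (∃ h : ℝ ≃ₜ ℝ, h ∈ HQrat ∧ ∀ᶠ y in 𝓝 x, h y = moebius (toR g) y) ∧
    (∃ h : ℝ ≃ₜ ℝ, h ∈ HQrat ∧ ContDiff ℝ 1 (h : ℝ → ℝ) ∧ ContDiff ℝ 1 (h.symm : ℝ → ℝ) ∧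
      ∀ᶠ y in 𝓝 x, h y = moebius (toR g) y) := by
  obtain ⟨p, q, hpx, hxq, hd⟩ := exists_rat_Icc_subset_of_mem_nhds (eventually_mdenom_ne _ hx)
  have hpq : (p : ℝ) < q := hpx.trans hxq
  obtain ⟨h, hh, hC1, hC1_symm⟩ := exists_homeomorph_tangentExtend hpq
    (fun y hy => hasDerivAt_moebius (toR g) (hd hy))
    (((mdenom_continuous _).pow 2).continuousOn.inv₀ fun y hy => pow_ne_zero 2 (hd hy))
    fun y hy => inv_pos.2 (sq_pos_of_ne_zero (hd hy))
  have hmem : h ∈ HQrat := mem_HQrat_of_eq_tangentExtend (toR_mem_entriesIn g)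
    (ratCast_mem_ratSubring p) (ratCast_mem_ratSubring q) hpq (fun y hy => hd hy) hh
  have hloc : ∀ᶠ y in 𝓝 x, h y = moebius (toR g) y :=
    hh ▸ tangentExtend_eventuallyEq_of_mem_Ioo ⟨hpx, hxq⟩
  exact ⟨⟨h, hmem, hloc⟩, h, hmem, hC1, hC1_symm, hloc⟩
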